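/- Let h, A, D : ℝ → ℝ be twice continuously differentiable on a neighborhood of L^sec ∈ ℝ with h'(L^sec) = 0, h''(L^sec) < 0, A(L^sec) > 0 and D'(L^sec) < 0, and let σ₀, φ ∈ ℝ satisfy cos(σ₀ − φ) = 1 (so that the corresponding equilibrium of the conservative toy model is a center). Then there exist ε₀ > 0 and c > 0 such that for every ε ∈ (0, ε₀) and every η ∈ (0, c ε), the dissipative toy model dσ/dt = h'(L) + ε A'(L) cos(σ − φ), dL/dt = ε A(L) sin(σ − φ) − η D(L) has an equilibrium point (σ_d, L_d) near (σ₀, L^sec) at which the Jacobian matrix J_D of the vector field satisfies trace(J_D) > 0, det(J_D) > 0 and (trace(J_D))²/4 − det(J_D) < 0; consequently the eigenvalues of J_D form a pair of non-real complex conjugates with strictly positive real part, i.e. the equilibrium is an unstable spiral. -/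

import Mathlib

/-!
At an equilibrium `sin (σ - φ) = u(L) := η D(L) / (ε A(L))`, so taking `σ = σ₀ + arcsin u(L)`
reduces the two equilibrium equations to the scalar equation
`h'(L) + ε A'(L) √(1 - u(L)²) = 0`. Its left side is `h''(Lsec) (L - Lsec) + o(L - Lsec) + O(ε)`,
so the intermediate value theorem gives a root `Ld` with `|Ld - Lsec| = O(ε)`, and then
`|σd - σ₀| = O(|u|) = O(η / ε)`.

At such a point the Jacobian has trace `-η D'(Ld) > 0`, while
`det J - (trace J)² / 4 = ε (-h''(Lsec) A(Lsec) cos (σ₀ - φ) + o(1))` as `ε → 0`, `η / ε → 0`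
and `(σ, L) → (σ₀, Lsec)`. Hence `0 < (trace J)² / 4 < det J`, and the eigenvalues are
`trace J / 2 ± i √(det J - (trace J)² / 4)`.
-/

open Real Set Matrix Filter Topology Metric

theorem Matrix.spectrum_map_ofReal_fin_two {M : Matrix (Fin 2) (Fin 2) ℝ} {x y : ℝ}
    (htr : M.trace = 2 * x) (hdet : M.det = x ^ 2 + y ^ 2) :
    spectrum ℂ (M.map Complex.ofReal) = {(x : ℂ) + y * Complex.I, (x : ℂ) - y * Complex.I} := by
  rw [trace_fin_two] at htr
  rw [det_fin_two] at hdet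
  ext z
  have hchar : (algebraMap ℂ (Matrix (Fin 2) (Fin 2) ℂ) z - M.map Complex.ofReal).det
      = (z - (x + y * Complex.I)) * (z - (x - y * Complex.I)) := by
    rw [det_fin_two]
    simp only [sub_apply, algebraMap_matrix_apply, map_apply, Fin.isValue, if_true,
      Fin.zero_eq_one_iff, Fin.one_eq_zero_iff, OfNat.ofNat_ne_one, if_false]
    have htr' : (M 0 0 : ℂ) + M 1 1 = 2 * x := by exact_mod_cast htr
    have hdet' : (M 0 0 : ℂ) * M 1 1 - M 0 1 * M 1 0 = x ^ 2 + y ^ 2 := by exact_mod_cast hdet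
    linear_combination (-z) * htr' + hdet' + (y : ℂ) ^ 2 * Complex.I_sq
  rw [spectrum.mem_iff, isUnit_iff_isUnit_det, isUnit_iff_ne_zero, not_ne_iff, hchar,
    mul_eq_zero, sub_eq_zero, sub_eq_zero, mem_insert_iff, mem_singleton_iff]

theorem abs_arcsin_le_pi_div_two_mul_abs {u : ℝ} (hu : |u| ≤ 1) : |arcsin u| ≤ π / 2 * |u| := by
  have key : ∀ v : ℝ, 0 ≤ v → v ≤ 1 → arcsin v ≤ π / 2 * v := fun v hv₀ hv => by
    have hx₀ : 0 ≤ π / 2 * v := by positivity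
    have hx₁ : π / 2 * v ≤ π / 2 := mul_le_of_le_one_right (by positivity) hv
    have hsin : v ≤ sin (π / 2 * v) := by
      simpa [← mul_assoc, pi_ne_zero] using mul_le_sin hx₀ hx₁
    calc arcsin v ≤ arcsin (sin (π / 2 * v)) := monotone_arcsin hsin
      _ = π / 2 * v := arcsin_sin (by linarith [pi_pos]) hx₁
  rcases le_or_gt 0 u with hu₀ | hu₀
  · rw [abs_of_nonneg hu₀] at hu ⊢
    rw [abs_of_nonneg (arcsin_nonneg.2 hu₀)]
    exact key u hu₀ hu
  · rw [abs_of_neg hu₀] at hu ⊢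
    rw [abs_of_nonpos (arcsin_nonpos.2 hu₀.le), ← arcsin_neg]
    exact key (-u) (by linarith) hu

theorem exists_add_eq_zero_of_hasDerivAt {g : ℝ → ℝ} {g' x₀ : ℝ} (hg : HasDerivAt g g' x₀)
    (hg₀ : g x₀ = 0) (hg' : g' ≠ 0) :
    ∃ r > 0, ∀ ρ, 0 ≤ ρ → ρ ≤ r → ∀ p : ℝ → ℝ,
      ContinuousOn (fun x => g x + p x) (closedBall x₀ ρ) →
      (∀ x ∈ closedBall x₀ ρ, |p x| ≤ |g'| * ρ / 2) →
      ∃ x ∈ closedBall x₀ ρ, g x + p x = 0 := by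
  have hlin : ∀ᶠ x in 𝓝 x₀, |g x - (x - x₀) * g'| ≤ |g'| / 2 * |x - x₀| := by
    simpa [hg₀] using hg.isLittleO.def (half_pos (abs_pos.2 hg'))
  obtain ⟨r, hr, hball⟩ := nhds_basis_closedBall.eventually_iff.1 hlin
  refine ⟨r, hr, fun ρ hρ hρr p hcont hp => ?_⟩
  -- `g' * (g + p)` stays within `g' ^ 2 * ρ` of `g' ^ 2 * (x - x₀)`, so it changes sign
  have key : ∀ x ∈ closedBall x₀ ρ,
      |g' * (g x + p x) - g' ^ 2 * (x - x₀)| ≤ g' ^ 2 * ρ := fun x hx => by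
    have hxρ : |x - x₀| ≤ ρ := by rwa [mem_closedBall, dist_eq] at hx
    calc |g' * (g x + p x) - g' ^ 2 * (x - x₀)| = |g'| * |g x - (x - x₀) * g' + p x| := by
          rw [← abs_mul]; ring_nf
      _ ≤ |g'| * (|g'| / 2 * ρ + |g'| * ρ / 2) := by
          gcongr
          exact (abs_add_le _ _).trans
            (add_le_add ((hball (closedBall_subset_closedBall hρr hx)).trans (by gcongr)) (hp x hx))
      _ = g' ^ 2 * ρ := by rw [← sq_abs]; ring
  rw [Real.closedBall_eq_Icc] at hcont key ⊢
  have hab : x₀ - ρ ≤ x₀ + ρ := by linarith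
  obtain ⟨x, hx, hx₀⟩ := intermediate_value_Icc (f := fun x => g' * (g x + p x)) hab
    (continuousOn_const.mul hcont) (show (0 : ℝ) ∈ Icc _ _ from
      ⟨by linarith [(abs_le.1 (key _ (left_mem_Icc.2 hab))).2],
        by linarith [(abs_le.1 (key _ (right_mem_Icc.2 hab))).1]⟩)
  exact ⟨x, hx, (mul_eq_zero.1 hx₀).resolve_left hg'⟩

theorem exists_add_mul_eq_zero_of_hasDerivAt {g : ℝ → ℝ} {g' x₀ M ρ : ℝ}
    (hg : HasDerivAt g g' x₀) (hg₀ : g x₀ = 0) (hg' : g' ≠ 0) (hM : 0 < M) (hρ : 0 < ρ) :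
    ∃ ε₀ > 0, ∀ ε, 0 ≤ ε → ε < ε₀ → ∀ q : ℝ → ℝ,
      ContinuousOn (fun x => g x + ε * q x) (closedBall x₀ ρ) →
      (∀ x ∈ closedBall x₀ ρ, |q x| ≤ M) →
      ∃ x ∈ closedBall x₀ ρ, |x - x₀| ≤ 2 * M / |g'| * ε ∧ g x + ε * q x = 0 := by
  obtain ⟨r, hr, hroot⟩ := exists_add_eq_zero_of_hasDerivAt hg hg₀ hg'
  have hg'₀ : 0 < |g'| := abs_pos.2 hg'
  refine ⟨min r ρ * |g'| / (2 * M), by positivity, fun ε hε hεε₀ q hcont hq => ?_⟩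
  have hε' : 2 * M / |g'| * ε ≤ min r ρ := by
    rw [lt_div_iff₀ (by positivity)] at hεε₀
    rw [div_mul_eq_mul_div, div_le_iff₀ hg'₀]
    linarith
  have hsub := closedBall_subset_closedBall (x := x₀) (hε'.trans (min_le_right r ρ))
  obtain ⟨x, hx, hx₀⟩ := hroot _ (by positivity) (hε'.trans (min_le_left r ρ)) (fun x => ε * q x)
    (hcont.mono hsub) fun x hx => by
      rw [abs_mul, abs_of_nonneg hε]
      calc ε * |q x| ≤ ε * M := by gcongr; exact hq x (hsub hx)
        _ = |g'| * (2 * M / |g'| * ε) / 2 := by field_simp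
  exact ⟨x, hsub hx, by rwa [mem_closedBall, dist_eq] at hx, hx₀⟩

theorem toy_equilibrium_of_reduced_root {h A D : ℝ → ℝ} {σ₀ φ ε η L : ℝ}
    (hcos : cos (σ₀ - φ) = 1) (hA : ε * A L ≠ 0) (hu : |η * D L / (ε * A L)| ≤ 1)
    (hroot : deriv h L + ε * deriv A L * √(1 - (η * D L / (ε * A L)) ^ 2) = 0) :
    deriv h L + ε * deriv A L * cos (σ₀ + arcsin (η * D L / (ε * A L)) - φ) = 0 ∧
      ε * A L * sin (σ₀ + arcsin (η * D L / (ε * A L)) - φ) - η * D L = 0 := by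
  have hsin : sin (σ₀ - φ) = 0 := sin_eq_zero_iff_cos_eq.2 (Or.inl hcos)
  rw [add_sub_right_comm, cos_add, sin_add, hcos, hsin, cos_arcsin,
    sin_arcsin (abs_le.1 hu).1 (abs_le.1 hu).2]
  constructor
  · linear_combination hroot
  · rw [zero_mul, zero_add, one_mul, mul_div_cancel₀ _ hA, sub_self]

theorem exists_toy_reduced_root {h A D : ℝ → ℝ} {Lsec : ℝ}
    (hh : ContDiffAt ℝ 2 h Lsec) (hA : ContDiffAt ℝ 1 A Lsec) (hD : ContDiffAt ℝ 0 D Lsec)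
    (hcrit : deriv h Lsec = 0) (hconc : deriv (deriv h) Lsec ≠ 0) (hApos : 0 < A Lsec) :
    ∃ ε₀ > 0, ∃ c > 0, ∃ K > 0, ∀ ε, 0 < ε → ε < ε₀ → ∀ η, 0 ≤ η → η < c * ε → ∃ L,
      |L - Lsec| ≤ K * ε ∧ 0 < A L ∧ |η * D L / (ε * A L)| ≤ 1 ∧
      |η * D L / (ε * A L)| ≤ K * (η / ε) ∧
      deriv h L + ε * deriv A L * √(1 - (η * D L / (ε * A L)) ^ 2) = 0 := by
  have hh₁ : ContDiffAt ℝ 1 (deriv h) Lsec := hh.derivWithin (by norm_num)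
  have hA₀ : ContDiffAt ℝ 0 (deriv A) Lsec := hA.derivWithin (by norm_num)
  set a := A Lsec
  set M := |deriv A Lsec| + 1
  set N := |D Lsec| + 1
  have hN : 0 < N := by positivity
  have hnear : ∀ᶠ L in 𝓝 Lsec, ContinuousAt (deriv h) L ∧ ContinuousAt A L ∧
      ContinuousAt (deriv A) L ∧ ContinuousAt D L ∧ a / 2 < A L ∧ |deriv A L| < M ∧
      |D L| < N := by
    filter_upwards [hh₁.eventually (by simp), hA.eventually (by simp), hA₀.eventually (by simp),
      hD.eventually (by simp), hA.continuousAt.eventually (lt_mem_nhds (half_lt_self hApos)),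
      hA₀.continuousAt.abs.eventually (gt_mem_nhds (lt_add_one _)),
      hD.continuousAt.abs.eventually (gt_mem_nhds (lt_add_one _))]
      with L h₁ h₂ h₃ h₄ h₅ h₆ h₇
    exact ⟨h₁.continuousAt, h₂.continuousAt, h₃.continuousAt, h₄.continuousAt, h₅, h₆, h₇⟩
  obtain ⟨ρ, hρ, hball⟩ := nhds_basis_closedBall.eventually_iff.1 hnear
  obtain ⟨ε₀, hε₀, hroot⟩ := exists_add_mul_eq_zero_of_hasDerivAt
    (hh₁.differentiableAt one_ne_zero).hasDerivAt hcrit hconc (by positivity : 0 < M) hρ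
  set K := max (2 * M / |deriv (deriv h) Lsec|) (2 * N / a)
  refine ⟨ε₀, hε₀, a / (2 * N), by positivity, K, by positivity,
    fun ε hε hεε₀ η hη hηc => ?_⟩
  have hu : ∀ L ∈ closedBall Lsec ρ, |η * D L / (ε * A L)| ≤ 2 * N / a * (η / ε) :=
    fun L hL => by
    obtain ⟨-, -, -, -, hAL, -, hDL⟩ := hball hL
    calc |η * D L / (ε * A L)| = η * |D L| / (ε * A L) := by
          rw [abs_div, abs_mul, abs_mul, abs_of_nonneg hη, abs_of_pos hε,
            abs_of_pos (hAL.trans' (by positivity))]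
      _ ≤ η * N / (ε * (a / 2)) := by gcongr
      _ = 2 * N / a * (η / ε) := by field_simp
  have hu₁ : 2 * N / a * (η / ε) ≤ 1 :=
    calc 2 * N / a * (η / ε) ≤ 2 * N / a * (a / (2 * N)) :=
          mul_le_mul_of_nonneg_left ((div_le_iff₀ hε).2 hηc.le) (by positivity)
      _ = 1 := by field_simp
  obtain ⟨L, hLρ, hL, hL₀⟩ := hroot ε hε.le hεε₀
    (fun L => deriv A L * √(1 - (η * D L / (ε * A L)) ^ 2))
    (fun L hL => by
      obtain ⟨hh', hA', hA'', hD', hAL, -, -⟩ := hball hL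
      have : A L ≠ 0 := (hAL.trans' (by positivity)).ne'
      exact ContinuousAt.continuousWithinAt (by fun_prop (disch := positivity)))
    (fun L hL => by
      rw [abs_mul, abs_of_nonneg (sqrt_nonneg _)]
      calc |deriv A L| * √(1 - (η * D L / (ε * A L)) ^ 2) ≤ M * 1 := by
            gcongr
            · exact (hball hL).2.2.2.2.2.1.le
            · exact sqrt_le_one.2 (by nlinarith)
        _ = M := mul_one M)
  refine ⟨L, hL.trans (by gcongr; exact le_max_left _ _),
    (hball hLρ).2.2.2.2.1.trans' (by positivity), (hu L hLρ).trans hu₁,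
    (hu L hLρ).trans (by gcongr; exact le_max_right _ _), by linear_combination hL₀⟩

theorem exists_toy_equilibrium {h A D : ℝ → ℝ} {Lsec σ₀ φ : ℝ}
    (hh : ContDiffAt ℝ 2 h Lsec) (hA : ContDiffAt ℝ 1 A Lsec) (hD : ContDiffAt ℝ 0 D Lsec)
    (hcrit : deriv h Lsec = 0) (hconc : deriv (deriv h) Lsec ≠ 0) (hApos : 0 < A Lsec)
    (hcos : cos (σ₀ - φ) = 1) :
    ∃ ε₀ > 0, ∃ c > 0, ∃ C > 0, ∀ ε, 0 < ε → ε < ε₀ → ∀ η, 0 ≤ η → η < c * ε →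
      ∃ σd Ld, deriv h Ld + ε * deriv A Ld * cos (σd - φ) = 0 ∧
        ε * A Ld * sin (σd - φ) - η * D Ld = 0 ∧ |Ld - Lsec| ≤ C * ε ∧ |σd - σ₀| ≤ C * η / ε := by
  obtain ⟨ε₀, hε₀, c, hc, K, hK, hred⟩ := exists_toy_reduced_root hh hA hD hcrit hconc hApos
  refine ⟨ε₀, hε₀, c, hc, 2 * K, by positivity, fun ε hε hεε₀ η hη hηc => ?_⟩
  obtain ⟨L, hL, hAL, hu₁, hu, hroot⟩ := hred ε hε hεε₀ η hη hηc
  obtain ⟨h₁, h₂⟩ := toy_equilibrium_of_reduced_root hcos (mul_pos hε hAL).ne' hu₁ hroot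
  refine ⟨_, L, h₁, h₂, hL.trans (by gcongr; linarith), ?_⟩
  rw [add_sub_cancel_left]
  calc |arcsin (η * D L / (ε * A L))| ≤ π / 2 * |η * D L / (ε * A L)| :=
        abs_arcsin_le_pi_div_two_mul_abs hu₁
    _ ≤ 2 * (K * (η / ε)) := by gcongr; linarith [pi_le_four]
    _ = 2 * K * η / ε := by ring

noncomputable def toyJacobian (h A D : ℝ → ℝ) (φ ε η σ L : ℝ) : Matrix (Fin 2) (Fin 2) ℝ :=
  !![deriv (fun σ => deriv h L + ε * deriv A L * cos (σ - φ)) σ,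
     deriv (fun L => deriv h L + ε * deriv A L * cos (σ - φ)) L;
     deriv (fun σ => ε * A L * sin (σ - φ) - η * D L) σ,
     deriv (fun L => ε * A L * sin (σ - φ) - η * D L) L]

theorem toyJacobian_eq {h A D : ℝ → ℝ} {φ ε η σ L : ℝ} (hh : DifferentiableAt ℝ (deriv h) L)
    (hA : DifferentiableAt ℝ A L) (hA' : DifferentiableAt ℝ (deriv A) L)
    (hD : DifferentiableAt ℝ D L) :
    toyJacobian h A D φ ε η σ L =
      !![-(ε * deriv A L * sin (σ - φ)), deriv (deriv h) L + ε * deriv (deriv A) L * cos (σ - φ);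
         ε * A L * cos (σ - φ), ε * deriv A L * sin (σ - φ) - η * deriv D L] := by
  have hL₁ : HasDerivAt (fun L => deriv h L + ε * deriv A L * cos (σ - φ))
      (deriv (deriv h) L + ε * deriv (deriv A) L * cos (σ - φ)) L :=
    hh.hasDerivAt.add ((hA'.hasDerivAt.const_mul ε).mul_const _)
  have hL₂ : HasDerivAt (fun L => ε * A L * sin (σ - φ) - η * D L)
      (ε * deriv A L * sin (σ - φ) - η * deriv D L) L :=
    ((hA.hasDerivAt.const_mul ε).mul_const _).sub (hD.hasDerivAt.const_mul η)
  simp [toyJacobian, hL₁.deriv, hL₂.deriv]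

theorem exists_toyJacobian_trace_pos_and_sq_trace_lt_det {h A D : ℝ → ℝ} {Lsec σ₀ φ : ℝ}
    (hh : ContDiffAt ℝ 2 h Lsec) (hA : ContDiffAt ℝ 2 A Lsec) (hD : ContDiffAt ℝ 1 D Lsec)
    (hconc : deriv (deriv h) Lsec < 0) (hApos : 0 < A Lsec) (hDdec : deriv D Lsec < 0)
    (hcos : 0 < cos (σ₀ - φ)) :
    ∃ δ > 0, ∀ ε η σ L, 0 < ε → ε < δ → 0 < η → η < δ * ε → |σ - σ₀| < δ → |L - Lsec| < δ →
      0 < (toyJacobian h A D φ ε η σ L).trace ∧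
        (toyJacobian h A D φ ε η σ L).trace ^ 2 / 4 < (toyJacobian h A D φ ε η σ L).det := by
  have hh₁ : ContDiffAt ℝ 1 (deriv h) Lsec := hh.derivWithin (by norm_num)
  have hA₁ : ContDiffAt ℝ 1 (deriv A) Lsec := hA.derivWithin (by norm_num)
  have hD₁ : ContinuousAt (deriv D) Lsec := (hD.derivWithin (m := 0) (by norm_num)).continuousAt
  have hnear : ∀ᶠ L in 𝓝 Lsec, DifferentiableAt ℝ (deriv h) L ∧ DifferentiableAt ℝ A L ∧
      DifferentiableAt ℝ (deriv A) L ∧ DifferentiableAt ℝ D L ∧ deriv D L < 0 := by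
    filter_upwards [hh₁.eventually (by simp), hA.eventually (by simp), hA₁.eventually (by simp),
      hD.eventually (by simp), hD₁.eventually (gt_mem_nhds hDdec)]
      with L h₁ h₂ h₃ h₄ h₅
    exact ⟨h₁.differentiableAt one_ne_zero, h₂.differentiableAt two_ne_zero,
      h₃.differentiableAt one_ne_zero, h₄.differentiableAt one_ne_zero, h₅⟩
  -- `det J - (trace J) ^ 2 / 4 = ε * R (ε, η / ε, σ, L)`
  let R : ℝ × ℝ × ℝ × ℝ → ℝ := fun q =>
    -q.1 * (deriv A q.2.2.2 * sin (q.2.2.1 - φ)) ^ 2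
      + q.2.1 * q.1 * deriv A q.2.2.2 * sin (q.2.2.1 - φ) * deriv D q.2.2.2
      - (deriv (deriv h) q.2.2.2 + q.1 * deriv (deriv A) q.2.2.2 * cos (q.2.2.1 - φ))
        * A q.2.2.2 * cos (q.2.2.1 - φ)
      - q.2.1 ^ 2 * q.1 * deriv D q.2.2.2 ^ 2 / 4
  have hR : ContinuousAt R (0, 0, σ₀, Lsec) := by
    have hh₂ := (hh₁.derivWithin (m := 0) (by norm_num)).continuousAt
    have hA₂ := (hA₁.derivWithin (m := 0) (by norm_num)).continuousAt
    have hA₁' := hA₁.continuousAt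
    have hA₀ := hA.continuousAt
    fun_prop
  have hR₀ : 0 < R (0, 0, σ₀, Lsec) := by
    simp only [R]; nlinarith [mul_pos (mul_pos (neg_pos.2 hconc) hApos) hcos]
  obtain ⟨δ, hδ, hball⟩ := Metric.eventually_nhds_iff.1 ((hR.eventually (lt_mem_nhds hR₀)).and
    ((continuous_snd.snd.snd.tendsto (0, 0, σ₀, Lsec)).eventually hnear))
  refine ⟨δ, hδ, fun ε η σ L hε hεδ hη hηδ hσ hL => ?_⟩
  have hdist : dist (ε, η / ε, σ, L) ((0 : ℝ), (0 : ℝ), σ₀, Lsec) < δ := by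
    simp only [Prod.dist_eq, Real.dist_eq, sub_zero, max_lt_iff]
    exact ⟨by rwa [abs_of_pos hε], by rwa [abs_of_pos (div_pos hη hε), div_lt_iff₀ hε], hσ, hL⟩
  obtain ⟨hRpos, hdh', hdA, hdA', hdD, hD'neg⟩ := hball hdist
  rw [toyJacobian_eq (L := L) hdh' hdA hdA' hdD, trace_fin_two_of, det_fin_two_of]
  have key := mul_pos hε hRpos
  simp only [R] at key
  refine ⟨by linarith [mul_pos hη (neg_pos.2 hD'neg)], sub_pos.1 (key.trans_eq ?_)⟩
  field_simp
  ring

/-- Spiral case of the paper's Theorem 2: a center of the conservative toy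
model (`cos (σ₀ - φ) = 1`, `h''(Lsec) < 0`, `A(Lsec) > 0`) becomes, for
`0 < η < c ε` with `ε` small and `D'(Lsec) < 0`, an equilibrium `(σ_d, L_d)`
of the dissipative toy model near `(σ₀, Lsec)` at which the Jacobian `J_D`
has `trace J_D > 0`, `det J_D > 0` and `(trace J_D)²/4 - det J_D < 0`, so its
eigenvalues are non-real complex conjugates with positive real part: an
unstable spiral. -/
theorem dissipative_center_becomes_unstable_spiral
    (h A D : ℝ → ℝ) (Lsec σ₀ φ : ℝ)
    (hh : ContDiffAt ℝ 2 h Lsec) (hA : ContDiffAt ℝ 2 A Lsec)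
    (hD : ContDiffAt ℝ 2 D Lsec)
    (hcrit : deriv h Lsec = 0) (hconc : deriv (deriv h) Lsec < 0)
    (hApos : 0 < A Lsec) (hDdec : deriv D Lsec < 0)
    (hcos : Real.cos (σ₀ - φ) = 1) :
    ∃ ε₀ > (0:ℝ), ∃ c > (0:ℝ), ∃ C > (0:ℝ),
      ∀ ε : ℝ, 0 < ε → ε < ε₀ → ∀ η : ℝ, 0 < η → η < c * ε →
        ∃ σd Ld : ℝ,
          deriv h Ld + ε * deriv A Ld * Real.cos (σd - φ) = 0 ∧
          ε * A Ld * Real.sin (σd - φ) - η * D Ld = 0 ∧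
          |Ld - Lsec| ≤ C * ε ∧ |σd - σ₀| ≤ C * η / ε ∧
          ∀ JD : Matrix (Fin 2) (Fin 2) ℝ,
            JD = !![deriv (fun σ => deriv h Ld + ε * deriv A Ld * Real.cos (σ - φ)) σd,
                    deriv (fun L => deriv h L + ε * deriv A L * Real.cos (σd - φ)) Ld;
                    deriv (fun σ => ε * A Ld * Real.sin (σ - φ) - η * D Ld) σd,
                    deriv (fun L => ε * A L * Real.sin (σd - φ) - η * D L) Ld] →
            0 < JD.trace ∧ 0 < JD.det ∧ JD.trace ^ 2 / 4 - JD.det < 0 ∧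
            ∃ x y : ℝ, 0 < x ∧ y ≠ 0 ∧
              spectrum ℂ (JD.map Complex.ofReal) =
                {(x : ℂ) + (y : ℂ) * Complex.I, (x : ℂ) - (y : ℂ) * Complex.I} := by
  obtain ⟨ε₁, hε₁, c₁, hc₁, C, hC, hequil⟩ := exists_toy_equilibrium hh (hA.of_le (by norm_num))
    (hD.of_le (by norm_num)) hcrit hconc.ne hApos hcos
  obtain ⟨δ, hδ, hspiral⟩ := exists_toyJacobian_trace_pos_and_sq_trace_lt_det hh hA
    (hD.of_le (by norm_num)) hconc hApos hDdec (hcos ▸ one_pos)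
  set δ' := min δ (δ / C)
  refine ⟨min ε₁ δ', by positivity, min c₁ δ', by positivity, C, hC,
    fun ε hε hεε₀ η hη hηc => ?_⟩
  have hηε : η / ε < δ' := by
    rw [div_lt_iff₀ hε]; exact hηc.trans_le (by gcongr; exact min_le_right _ _)
  obtain ⟨σd, Ld, h₁, h₂, hL, hσ⟩ := hequil ε hε (hεε₀.trans_le (min_le_left _ _)) η hη.le
    (hηc.trans_le (by gcongr; exact min_le_left _ _))
  refine ⟨σd, Ld, h₁, h₂, hL, hσ, fun JD hJD => ?_⟩
  have hCδ : ∀ t, t < δ' → C * t < δ := fun t ht =>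
    calc C * t < C * (δ / C) := by gcongr; exact ht.trans_le (min_le_right _ _)
      _ = δ := mul_div_cancel₀ _ hC.ne'
  have hεδ : ε < δ' := hεε₀.trans_le (min_le_right _ _)
  obtain ⟨htr, hdisc⟩ := hspiral ε η σd Ld hε (hεδ.trans_le (min_le_left _ _)) hη
    (hηc.trans_le (by gcongr; exact (min_le_right _ _).trans (min_le_left _ _)))
    (hσ.trans_lt (by rw [mul_div_assoc]; exact hCδ _ hηε)) (hL.trans_lt (hCδ _ hεδ))
  have hdisc' := sub_pos.2 hdisc
  obtain rfl : JD = toyJacobian h A D φ ε η σd Ld := hJD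
  exact ⟨htr, (by positivity : (0 : ℝ) ≤ _ ^ 2 / 4).trans_lt hdisc, by linarith, _, _, half_pos htr,
    (sqrt_pos.2 hdisc').ne',
    Matrix.spectrum_map_ofReal_fin_two (by ring) (by rw [sq_sqrt hdisc'.le]; ring)⟩
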